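/- arXiv:1504.02357 — 2 statements merged into one kernel-verified Lean document; each statement's English description precedes it below -/
import Mathlib

section
/- With M = X^T ∪ Y ∪ Z^T as constructed, M is a (k−m)-block over F_q; that is, every m-dimensional linear subspace of F_q^k contains at least one element of M. -/
/-- The support of a vector `x ∈ F_q^k`, as a finite set of coordinates. -/
def suppF {F : Type*} [Field F] [DecidableEq F] {k : ℕ} (x : Fin k → F) : Finset (Fin k) :=
  Finset.univ.filter fun i => x i ≠ 0

/-- `X^T`: the nonzero vectors whose support avoids `T`. -/
def XT {F : Type*} [Field F] [DecidableEq F] {k : ℕ} (T : Finset (Fin k)) :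
    Set (Fin k → F) :=
  {x | x ≠ 0 ∧ ∀ t ∈ T, x t = 0}

/-- `Y_𝒱^T`: the nonzero vectors whose support meets `T` in exactly one coordinate,
with all nonzero scalar multiples of the vectors `v_i + λ•e_j` (for `j ∈ T` and
`λ ≠ 0`) removed. -/
def YT {F : Type*} [Field F] [DecidableEq F] {k : ℕ} {ι : Type*} (T : Finset (Fin k))
    (v : ι → Fin k → F) : Set (Fin k → F) :=
  {x | x ≠ 0 ∧ (suppF x ∩ T).card = 1 ∧
    ¬∃ i : ι, ∃ j ∈ T, ∃ lam c : F, lam ≠ 0 ∧ c ≠ 0 ∧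
      x = c • (v i + lam • (Pi.single j (1 : F) : Fin k → F))}

/-- `Z^T`: the nonzero vectors whose support is a 2-element subset of `T`. -/
def ZT {F : Type*} [Field F] [DecidableEq F] {k : ℕ} (T : Finset (Fin k)) :
    Set (Fin k → F) :=
  {x | x ≠ 0 ∧ suppF x ⊆ T ∧ (suppF x).card = 2}

/-- The point set `M = X^T ∪ Y_𝒱^T ∪ Z^T`. -/
def blockM {F : Type*} [Field F] [DecidableEq F] {k : ℕ} {ι : Type*} (T : Finset (Fin k))
    (v : ι → Fin k → F) : Set (Fin k → F) :=
  XT T ∪ YT T v ∪ ZT T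

/-- `M = X^T ∪ Y ∪ Z^T` is a `(k-m)`-block over `F_q`: every
`m`-dimensional linear subspace of `F_q^k` contains an element of `M`. -/
theorem stmt16 {F : Type*} [Field F] [Fintype F] [DecidableEq F] {k m : ℕ}
    (hm1 : 1 ≤ m) (hmk : m ≤ k - 1)
    (T : Finset (Fin k)) (hT : T.card = m)
    (v : Fin (m - 1) → Fin k → F) (hv0 : ∀ i, v i ≠ 0)
    (hvind : ∀ i j, i ≠ j → ∀ c : F, v i ≠ c • v j)
    (hvT : ∀ i, ∀ t ∈ T, v i t = 0) :
    ∀ U : Submodule F (Fin k → F), Module.finrank F U = m →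
      ∃ x ∈ blockM T v, x ∈ U := by
  intro U hU
  classical
  set p : U →ₗ[F] (T → F) :=
    (LinearMap.funLeft F F (fun t : T => (t : Fin k))).comp U.subtype with hp
  have hpapp : ∀ (x : U) (t : T), p x t = (x : Fin k → F) t := fun x t => rfl
  by_cases hker : LinearMap.ker p = ⊥
  · have hcardT : Fintype.card T = m := by simp [hT]
    have hfinT : Module.finrank F (T → F) = m := by
      rw [Module.finrank_fintype_fun_eq_card, hcardT]
    have hinj : Function.Injective p := LinearMap.ker_eq_bot.mp hker
    have hsurj : Function.Surjective p := by
      rw [← LinearMap.range_eq_top]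
      apply Submodule.eq_top_of_finrank_eq
      rw [LinearMap.finrank_range_of_inj hinj, hU, hfinT]
    choose u hu using fun j : T => hsurj (Pi.single j 1)
    have hu1 : ∀ j : T, (u j : Fin k → F) (j : Fin k) = 1 := by
      intro j
      have := congrFun (hu j) j
      rw [hpapp] at this
      rw [this, Pi.single_apply, if_pos rfl]
    have hu0 : ∀ j t : T, (t : Fin k) ≠ (j : Fin k) → (u j : Fin k → F) (t : Fin k) = 0 := by
      intro j t ht
      have := congrFun (hu j) t
      rw [hpapp] at this
      rw [this, Pi.single_apply, if_neg (fun h => ht (congrArg Subtype.val h))]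
    have hune0 : ∀ j : T, (u j : Fin k → F) ≠ 0 := by
      intro j h
      apply one_ne_zero (α := F)
      rw [← hu1 j, h]
      rfl
    have hsupp : ∀ j : T, suppF (u j : Fin k → F) ∩ T = {(j : Fin k)} := by
      intro j
      ext t
      simp only [Finset.mem_inter, Finset.mem_singleton, suppF, Finset.mem_filter,
        Finset.mem_univ, true_and]
      constructor
      · rintro ⟨hne, htT⟩
        by_contra h
        exact hne (hu0 j ⟨t, htT⟩ h)
      · rintro rfl
        refine ⟨?_, j.2⟩
        rw [hu1 j]
        exact one_ne_zero
    by_cases hY : ∃ j : T, (u j : Fin k → F) ∈ YT T v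
    · obtain ⟨j, hj⟩ := hY
      exact ⟨u j, Or.inl (Or.inr hj), (u j).2⟩
    · push_neg at hY
      have hex : ∀ j : T, ∃ i : Fin (m-1), ∃ c : F, c ≠ 0 ∧
          (u j : Fin k → F) = c • v i + Pi.single (j : Fin k) 1 := by
        intro j
        have h1 : (suppF (u j : Fin k → F) ∩ T).card = 1 := by
          rw [hsupp j]; simp
        have hYj := hY j
        simp only [YT, Set.mem_setOf_eq, not_and, not_not] at hYj
        obtain ⟨i, j', hj'T, lam, c, hlam, hc, heq⟩ := hYj (hune0 j) h1
        have hh := congrFun heq (j : Fin k)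
        rw [hu1 j] at hh
        simp only [Pi.smul_apply, Pi.add_apply, hvT i _ j.2, zero_add, smul_eq_mul,
          Pi.single_apply] at hh
        by_cases hjj : (j : Fin k) = j'
        · rw [if_pos hjj, mul_one] at hh
          refine ⟨i, c, hc, ?_⟩
          rw [heq, smul_add, smul_smul, hh.symm, one_smul, ← hjj]
        · rw [if_neg hjj, mul_zero, mul_zero] at hh
          exact absurd hh one_ne_zero
      choose i c hc hcu using hex
      have hlt : Fintype.card (Fin (m-1)) < Fintype.card T := by
        rw [hcardT, Fintype.card_fin]; omega
      obtain ⟨a, b, hab, hiab⟩ := Fintype.exists_ne_map_eq_of_card_lt i hlt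
      have hab' : (a : Fin k) ≠ (b : Fin k) := fun h => hab (Subtype.ext h)
      set x : Fin k → F := c b • (u a : Fin k → F) - c a • (u b : Fin k → F) with hx
      have hxU : x ∈ U := U.sub_mem (U.smul_mem _ (u a).2) (U.smul_mem _ (u b).2)
      have hxeq : x = c b • (Pi.single (a : Fin k) (1:F) : Fin k → F)
          - c a • (Pi.single (b : Fin k) (1:F) : Fin k → F) := by
        rw [hx, hcu a, hcu b, hiab]
        ext t
        simp only [Pi.sub_apply, Pi.smul_apply, Pi.add_apply, smul_eq_mul]
        ring
      have hxa : x (a : Fin k) = c b := by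
        rw [hxeq]
        simp [Pi.single_apply, hab']
      have hxb : x (b : Fin k) = -(c a) := by
        rw [hxeq]
        simp [Pi.single_apply, Ne.symm hab']
      have hxt : ∀ t : Fin k, t ≠ (a : Fin k) → t ≠ (b : Fin k) → x t = 0 := by
        intro t h1 h2
        rw [hxeq]
        simp [Pi.single_apply, h1, h2]
      have hsx : suppF x = {(a : Fin k), (b : Fin k)} := by
        ext t
        simp only [suppF, Finset.mem_filter, Finset.mem_univ, true_and,
          Finset.mem_insert, Finset.mem_singleton]
        constructor
        · intro h
          by_contra hcon
          push_neg at hcon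
          exact h (hxt t hcon.1 hcon.2)
        · rintro (rfl | rfl)
          · rw [hxa]; exact hc b
          · rw [hxb]; simpa using hc a
      have hxne : x ≠ 0 := by
        intro h
        apply hc b
        rw [← hxa, h]
        rfl
      refine ⟨x, Or.inr ⟨hxne, ?_, ?_⟩, hxU⟩
      · rw [hsx]
        intro t ht
        simp only [Finset.mem_insert, Finset.mem_singleton] at ht
        rcases ht with rfl | rfl
        · exact a.2
        · exact b.2
      · rw [hsx, Finset.card_insert_of_notMem (by simpa using hab'), Finset.card_singleton]
  · obtain ⟨y, hyker, hyne⟩ := Submodule.exists_mem_ne_zero_of_ne_bot hker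
    refine ⟨y, Or.inl (Or.inl ⟨?_, ?_⟩), y.2⟩
    · exact fun h => hyne (Subtype.ext h)
    · intro t ht
      exact congrFun (LinearMap.mem_ker.mp hyker) ⟨t, ht⟩
end

section
/- With M = X^T ∪ Y ∪ Z^T as constructed, fix j ∈ T and let M_j = {x ∈ M : j ∈ supp(x)}. Then: (1) the number of one-dimensional subspaces of F_q^k spanned by elements of M_j equals q^{k−m}; and (2) for any x, y ∈ M_j that are not scalar multiples of one another, there exist α, β ∈ F_q such that α·x + β·y is a nonzero element of M. -/
lemma mem_suppF {F : Type*} [Field F] [DecidableEq F] {k : ℕ} {x : Fin k → F} {p : Fin k} :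
    p ∈ suppF x ↔ x p ≠ 0 := by simp [suppF]

lemma suppF_smul {F : Type*} [Field F] [DecidableEq F] {k : ℕ} {c : F} (hc : c ≠ 0)
    (x : Fin k → F) : suppF (c • x) = suppF x := by
  ext p; simp [suppF, hc]

lemma blockM_smul {F : Type*} [Field F] [DecidableEq F] {k : ℕ} {ι : Type*}
    {T : Finset (Fin k)} {v : ι → Fin k → F} {c : F} (hc : c ≠ 0) {x : Fin k → F}
    (hx : x ∈ blockM T v) : c • x ∈ blockM T v := by
  rcases hx with (hx | hx) | hx
  · exact Or.inl (Or.inl ⟨smul_ne_zero hc hx.1, fun t ht => by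
      simp [Pi.smul_apply, hx.2 t ht]⟩)
  · refine Or.inl (Or.inr ⟨smul_ne_zero hc hx.1, ?_, ?_⟩)
    · rw [suppF_smul hc]; exact hx.2.1
    · rintro ⟨i, j', hj', lam, c', hlam, hc', heq⟩
      refine hx.2.2 ⟨i, j', hj', lam, c⁻¹ * c', hlam, mul_ne_zero (inv_ne_zero hc) hc', ?_⟩
      have : x = c⁻¹ • (c • x) := by rw [smul_smul, inv_mul_cancel₀ hc, one_smul]
      rw [this, heq, smul_smul]
  · refine Or.inr ⟨smul_ne_zero hc hx.1, ?_, ?_⟩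
    · rw [suppF_smul hc]; exact hx.2.1
    · rw [suppF_smul hc]; exact hx.2.2

open Classical in
noncomputable def psiAux {F : Type*} [Field F] {k m : ℕ} (v : Fin (m - 1) → Fin k → F)
    (σ : Fin (m - 1) → Fin k) (j : Fin k) (w : Fin k → F) : Fin k → F :=
  if h : ∃ p : Fin (m - 1) × F, p.2 ≠ 0 ∧ w = p.2 • v p.1 then
    (Pi.single j 1 : Fin k → F) + h.choose.2 • (Pi.single (σ h.choose.1) 1 : Fin k → F)
  else w + (Pi.single j 1 : Fin k → F)

lemma psiAux_neg {F : Type*} [Field F] {k m : ℕ} {v : Fin (m - 1) → Fin k → F}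
    {σ : Fin (m - 1) → Fin k} {j : Fin k} {w : Fin k → F}
    (h : ¬∃ p : Fin (m - 1) × F, p.2 ≠ 0 ∧ w = p.2 • v p.1) :
    psiAux v σ j w = w + (Pi.single j 1 : Fin k → F) := by
  rw [psiAux, dif_neg h]

lemma psiAux_pos {F : Type*} [Field F] {k m : ℕ} {v : Fin (m - 1) → Fin k → F}
    {σ : Fin (m - 1) → Fin k} {j : Fin k} {w : Fin k → F} {i : Fin (m - 1)} {μ : F}
    (huniq : ∀ (i i' : Fin (m - 1)) (μ μ' : F), μ ≠ 0 → μ' ≠ 0 →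
      μ • v i = μ' • v i' → i = i' ∧ μ = μ')
    (hμ : μ ≠ 0) (hw : w = μ • v i) :
    psiAux v σ j w = (Pi.single j 1 : Fin k → F) + μ • (Pi.single (σ i) 1 : Fin k → F) := by
  have hex : ∃ p : Fin (m - 1) × F, p.2 ≠ 0 ∧ w = p.2 • v p.1 := ⟨(i, μ), hμ, hw⟩
  rw [psiAux, dif_pos hex]
  obtain ⟨h1, h2⟩ := hex.choose_spec
  obtain ⟨hi, hm⟩ := huniq _ _ _ _ h1 hμ (h2.symm.trans hw)
  rw [hi, hm]

/-- fix `j ∈ T` and let `M_j = {x ∈ M : j ∈ supp(x)}`. Then (1) the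
number of one-dimensional subspaces of `F_q^k` spanned by elements of `M_j` is
`q^(k-m)`, and (2) for any `x, y ∈ M_j` that are not scalar multiples of one another,
there are `α, β ∈ F_q` with `α•x + β•y` a nonzero element of `M`. -/
theorem stmt17 {F : Type*} [Field F] [Fintype F] [DecidableEq F] {k m : ℕ}
    (hm1 : 1 ≤ m) (hmk : m ≤ k - 1)
    (T : Finset (Fin k)) (hT : T.card = m)
    (v : Fin (m - 1) → Fin k → F) (hv0 : ∀ i, v i ≠ 0)
    (hvind : ∀ i j, i ≠ j → ∀ c : F, v i ≠ c • v j)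
    (hvT : ∀ i, ∀ t ∈ T, v i t = 0)
    (j : Fin k) (hj : j ∈ T)
    (Mj : Set (Fin k → F)) (hMj : Mj = {x ∈ blockM T v | x j ≠ 0}) :
    Set.ncard {U : Submodule F (Fin k → F) | ∃ x ∈ Mj, U = Submodule.span F {x}} =
        Fintype.card F ^ (k - m) ∧
    ∀ x ∈ Mj, ∀ y ∈ Mj, (¬∃ c : F, y = c • x) →
      ∃ α β : F, α • x + β • y ≠ 0 ∧ α • x + β • y ∈ blockM T v := by
  classical
  subst hMj
  have hchar : ∀ u : Fin k → F, u ∈ blockM T v → u j ≠ 0 →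
      ((∀ t ∈ T, t ≠ j → u t = 0) ∧
        ¬∃ i : Fin (m - 1), ∃ j' ∈ T, ∃ lam c : F, lam ≠ 0 ∧ c ≠ 0 ∧
          u = c • (v i + lam • (Pi.single j' (1 : F) : Fin k → F))) ∨
      (∃ t, t ∈ T ∧ t ≠ j ∧ u t ≠ 0 ∧ ∀ p : Fin k, p ≠ j → p ≠ t → u p = 0) := by
    intro u huM huj
    rcases huM with (hu | hu) | hu
    · exact absurd (hu.2 j hj) huj
    · left
      obtain ⟨hu0, hcard, hexcl⟩ := hu
      obtain ⟨a, ha⟩ := Finset.card_eq_one.mp hcard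
      have hja : j = a := by
        have h2 : j ∈ suppF u ∩ T := Finset.mem_inter.mpr ⟨mem_suppF.mpr huj, hj⟩
        rw [ha] at h2; exact Finset.mem_singleton.mp h2
      refine ⟨fun t ht htj => ?_, hexcl⟩
      by_contra hut
      have h2 : t ∈ suppF u ∩ T := Finset.mem_inter.mpr ⟨mem_suppF.mpr hut, ht⟩
      rw [ha] at h2
      exact htj ((Finset.mem_singleton.mp h2).trans hja.symm)
    · right
      obtain ⟨hu0, hsub, hcard⟩ := hu
      obtain ⟨a, b, hab, hs⟩ := Finset.card_eq_two.mp hcard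
      have hjmem : j ∈ suppF u := mem_suppF.mpr huj
      rw [hs] at hjmem
      have hmem : ∀ p : Fin k, u p ≠ 0 → p = a ∨ p = b := by
        intro p hp
        have : p ∈ suppF u := mem_suppF.mpr hp
        rw [hs] at this
        simpa using this
      rcases Finset.mem_insert.mp hjmem with hja | hjb
      · refine ⟨b, hsub (by rw [hs]; simp), fun hbj => hab (hja.symm.trans hbj.symm), ?_, ?_⟩
        · exact mem_suppF.mp (by rw [hs]; simp)
        · intro p hpj hpb
          by_contra hp
          rcases hmem p hp with rfl | rfl
          · exact hpj hja.symm
          · exact hpb rfl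
      · have hjb' : j = b := Finset.mem_singleton.mp hjb
        refine ⟨a, hsub (by rw [hs]; simp), fun haj => hab (haj.trans hjb'), ?_, ?_⟩
        · exact mem_suppF.mp (by rw [hs]; simp)
        · intro p hpj hpa
          by_contra hp
          rcases hmem p hp with rfl | rfl
          · exact hpa rfl
          · exact hpj hjb'.symm
  constructor
  · -- counting part
    have huniq : ∀ (i i' : Fin (m - 1)) (μ μ' : F), μ ≠ 0 → μ' ≠ 0 →
        μ • v i = μ' • v i' → i = i' ∧ μ = μ' := by
      intro i i' μ μ' hμ hμ' h
      have hii : i = i' := by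
        by_contra hne'
        apply hvind i i' hne' (μ⁻¹ * μ')
        rw [mul_smul, ← h, smul_smul, inv_mul_cancel₀ hμ, one_smul]
      subst hii
      obtain ⟨p, hp⟩ := Function.ne_iff.mp (hv0 i)
      simp only [Pi.zero_apply] at hp
      have h2 := congrFun h p
      simp only [Pi.smul_apply, smul_eq_mul] at h2
      exact ⟨rfl, mul_right_cancel₀ hp h2⟩
    have hTe : (T.erase j).card = m - 1 := by rw [Finset.card_erase_of_mem hj, hT]
    set σe := (Finset.equivFinOfCardEq hTe).symm with hσe
    set σf : Fin (m - 1) → Fin k := fun i => (σe i : Fin k) with hσf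
    have hσT : ∀ i, σf i ∈ T := fun i => Finset.mem_of_mem_erase (σe i).2
    have hσj : ∀ i, σf i ≠ j := fun i => Finset.ne_of_mem_erase (σe i).2
    have hσinj : Function.Injective σf := fun a b h => σe.injective (Subtype.ext h)
    have hσsurj : ∀ t ∈ T.erase j, ∃ i, σf i = t := fun t ht =>
      ⟨σe.symm ⟨t, ht⟩, by simp [hσf]⟩
    set ψ : (Fin k → F) → (Fin k → F) := psiAux v σf j with hψ
    set W : Set (Fin k → F) := {w | ∀ t ∈ T, w t = 0} with hW
    have hWmem : ∀ w : Fin k → F, w ∈ W ↔ ∀ t ∈ T, w t = 0 := fun w => Iff.rfl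
    have hψj : ∀ w ∈ W, ψ w j = 1 := by
      intro w hw
      by_cases hP : ∃ p : Fin (m - 1) × F, p.2 ≠ 0 ∧ w = p.2 • v p.1
      · obtain ⟨⟨i, μ⟩, hμ, hwv⟩ := hP
        rw [hψ, psiAux_pos huniq hμ hwv]
        simp [Pi.single_apply, Ne.symm (hσj i)]
      · rw [hψ, psiAux_neg hP]
        simp [(hWmem w).mp hw j hj]
    have hψM : ∀ w ∈ W, ψ w ∈ blockM T v := by
      intro w hw
      have hw' := (hWmem w).mp hw
      by_cases hP : ∃ p : Fin (m - 1) × F, p.2 ≠ 0 ∧ w = p.2 • v p.1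
      · obtain ⟨⟨i, μ⟩, hμ, hwv⟩ := hP
        rw [hψ, psiAux_pos huniq hμ hwv]
        have hval : ∀ p : Fin k,
            ((Pi.single j 1 : Fin k → F) + μ • (Pi.single (σf i) 1 : Fin k → F)) p
              = if p = j then 1 else if p = σf i then μ else 0 := by
          intro p
          rcases eq_or_ne p j with rfl | h1
          · simp [Pi.single_apply, Ne.symm (hσj i)]
          · rcases eq_or_ne p (σf i) with rfl | h2
            · simp [Pi.single_apply, h1]
            · simp [Pi.single_apply, h1, h2]
        have hset : suppF ((Pi.single j 1 : Fin k → F) + μ • (Pi.single (σf i) 1 : Fin k → F))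
            = {j, σf i} := by
          ext p
          rw [mem_suppF, hval p]
          simp only [Finset.mem_insert, Finset.mem_singleton]
          split_ifs with h1 h2
          · simp [h1]
          · simp [h2, hμ]
          · simp [h1, h2]
        refine Or.inr ⟨?_, ?_, ?_⟩
        · intro h0
          have h2 := congrFun h0 j
          rw [hval j] at h2
          simp at h2
        · rw [hset]
          exact Finset.insert_subset hj (Finset.singleton_subset_iff.mpr (hσT i))
        · rw [hset]
          exact Finset.card_pair (Ne.symm (hσj i))
      · rw [hψ, psiAux_neg hP]
        refine Or.inl (Or.inr ⟨?_, ?_, ?_⟩)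
        · intro h0
          have h2 := congrFun h0 j
          simp [hw' j hj] at h2
        · have hsupp : suppF (w + (Pi.single j 1 : Fin k → F)) ∩ T = {j} := by
            apply Finset.eq_singleton_iff_unique_mem.mpr
            constructor
            · refine Finset.mem_inter.mpr ⟨mem_suppF.mpr ?_, hj⟩
              simp [hw' j hj]
            · intro p hp
              obtain ⟨hp1, hp2⟩ := Finset.mem_inter.mp hp
              by_contra hpj
              apply mem_suppF.mp hp1
              simp [hw' p hp2, Pi.single_apply, hpj]
          rw [hsupp]; simp
        · rintro ⟨i, j', hj', lam, c', hlam, hc', heq⟩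
          have hj'j : j' = j := by
            by_contra hne'
            have h2 := congrFun heq j
            simp [hw' j hj, hvT i j hj, Pi.single_apply, Ne.symm hne'] at h2
          rw [hj'j] at heq
          apply hP
          refine ⟨(i, c'), hc', ?_⟩
          funext p
          rcases eq_or_ne p j with rfl | hpj
          · simp [hw' p hj, hvT i p hj]
          · have h2 := congrFun heq p
            simp only [Pi.add_apply, Pi.smul_apply, smul_eq_mul, Pi.single_apply,
              if_neg hpj, add_zero, mul_zero] at h2
            simpa using h2
    have hψinj : ∀ w ∈ W, ∀ w' ∈ W, ψ w = ψ w' → w = w' := by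
      intro w hw w' hw' h
      rw [hψ] at h
      by_cases hP : ∃ p : Fin (m - 1) × F, p.2 ≠ 0 ∧ w = p.2 • v p.1 <;>
        by_cases hP' : ∃ p : Fin (m - 1) × F, p.2 ≠ 0 ∧ w' = p.2 • v p.1
      · obtain ⟨⟨i, μ⟩, hμ, hwv⟩ := hP
        obtain ⟨⟨i', μ'⟩, hμ', hwv'⟩ := hP'
        rw [psiAux_pos huniq hμ hwv, psiAux_pos huniq hμ' hwv'] at h
        have hσ : σf i = σf i' := by
          by_contra hss
          have h2 := congrFun h (σf i)
          simp [Pi.single_apply, hσj i, hss] at h2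
          exact hμ h2
        have hii : i = i' := hσinj hσ
        subst hii
        have hμμ : μ = μ' := by
          have h2 := congrFun h (σf i)
          simpa [Pi.single_apply, hσj i] using h2
        rw [hwv, hwv', hμμ]
      · obtain ⟨⟨i, μ⟩, hμ, hwv⟩ := hP
        rw [psiAux_pos huniq hμ hwv, psiAux_neg hP'] at h
        exfalso
        have h2 := congrFun h (σf i)
        simp [Pi.single_apply, hσj i, (hWmem w').mp hw' (σf i) (hσT i)] at h2
        exact hμ h2
      · obtain ⟨⟨i, μ⟩, hμ, hwv⟩ := hP'
        rw [psiAux_neg hP, psiAux_pos huniq hμ hwv] at h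
        exfalso
        have h2 := congrFun h (σf i)
        simp [Pi.single_apply, hσj i, (hWmem w).mp hw (σf i) (hσT i)] at h2
        exact hμ h2.symm
      · rw [psiAux_neg hP, psiAux_neg hP'] at h
        exact add_right_cancel h
    have hinj : Set.InjOn (fun w => Submodule.span F {ψ w}) W := by
      intro w hw w' hw' h
      dsimp only at h
      have hmem : ψ w ∈ Submodule.span F {ψ w'} :=
        h ▸ Submodule.mem_span_singleton_self (ψ w)
      obtain ⟨a, ha⟩ := Submodule.mem_span_singleton.mp hmem
      have haj := congrFun ha j
      simp [hψj w hw, hψj w' hw'] at haj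
      apply hψinj w hw w' hw'
      rw [← ha, haj, one_smul]
    have himg : {U : Submodule F (Fin k → F) |
        ∃ x ∈ {x ∈ blockM T v | x j ≠ 0}, U = Submodule.span F {x}} =
        (fun w => Submodule.span F {ψ w}) '' W := by
      ext U
      simp only [Set.mem_setOf_eq, Set.mem_image]
      constructor
      · rintro ⟨x, ⟨hxM, hxj⟩, rfl⟩
        set y : Fin k → F := (x j)⁻¹ • x with hy
        have hyM : y ∈ blockM T v := blockM_smul (inv_ne_zero hxj) hxM
        have hyj : y j = 1 := by
          simp [hy, inv_mul_cancel₀ hxj]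
        have hspan : Submodule.span F {y} = Submodule.span F {x} :=
          Submodule.span_singleton_smul_eq (IsUnit.mk0 _ (inv_ne_zero hxj)) x
        rcases hchar y hyM (by rw [hyj]; exact one_ne_zero) with hcase | hcase
        · refine ⟨y - Pi.single j 1, (hWmem _).mpr fun t ht => ?_, ?_⟩
          · rcases eq_or_ne t j with rfl | htj
            · simp [hyj]
            · simp [hcase.1 t ht htj, Pi.single_apply, htj]
          · have hP : ¬∃ p : Fin (m - 1) × F, p.2 ≠ 0 ∧
                y - Pi.single j 1 = p.2 • v p.1 := by
              rintro ⟨⟨i, μ⟩, hμ, hwv⟩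
              apply hcase.2
              refine ⟨i, j, hj, μ⁻¹, μ, inv_ne_zero hμ, hμ, ?_⟩
              rw [smul_add, ← hwv, smul_smul, mul_inv_cancel₀ hμ, one_smul,
                sub_add_cancel]
            rw [hψ, psiAux_neg hP, sub_add_cancel, hspan]
        · obtain ⟨t, htT, htj, hyt, hy0'⟩ := hcase
          obtain ⟨i, hi⟩ := hσsurj t (Finset.mem_erase.mpr ⟨htj, htT⟩)
          refine ⟨y t • v i, (hWmem _).mpr fun t' ht' => by simp [hvT i t' ht'], ?_⟩
          have hstep : ψ (y t • v i) =
              (Pi.single j 1 : Fin k → F) + y t • (Pi.single (σf i) 1 : Fin k → F) := by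
            rw [hψ]; exact psiAux_pos huniq hyt rfl
          have hyeq : (Pi.single j 1 : Fin k → F) + y t • (Pi.single t 1 : Fin k → F) = y := by
            funext p
            rcases eq_or_ne p j with rfl | hpj
            · simp [Pi.single_apply, Ne.symm htj, hyj]
            · rcases eq_or_ne p t with rfl | hpt
              · simp [Pi.single_apply, htj]
              · simp [Pi.single_apply, hpj, hpt, hy0' p hpj hpt]
          rw [hstep, hi, hyeq, hspan]
      · rintro ⟨w, hw, rfl⟩
        exact ⟨ψ w, ⟨hψM w hw, by rw [hψj w hw]; exact one_ne_zero⟩, rfl⟩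
    rw [himg, Set.ncard_image_of_injOn hinj]
    have e : ↥W ≃ (↥(Tᶜ) → F) :=
      { toFun := fun w p => w.1 p.1
        invFun := fun f => ⟨fun p => if hp : p ∈ T then 0 else f ⟨p, Finset.mem_compl.mpr hp⟩,
          fun t ht => dif_pos ht⟩
        left_inv := fun w => Subtype.ext (funext fun p => by
          by_cases hp : p ∈ T
          · simp only [dif_pos hp]
            exact ((hWmem w.1).mp w.2 p hp).symm
          · simp only [dif_neg hp])
        right_inv := fun f => funext fun p => by
          have hp : ↑p ∉ T := Finset.mem_compl.mp p.2
          simp only [dif_neg hp] }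
    rw [← Nat.card_coe_set_eq, Nat.card_congr e, Nat.card_eq_fintype_card,
      Fintype.card_fun, Fintype.card_coe, Finset.card_compl, Fintype.card_fin, hT]
  · rintro x ⟨hxM, hxj⟩ y ⟨hyM, hyj⟩ hne
    have hc : x j / y j ≠ 0 := div_ne_zero hxj hyj
    set c : F := x j / y j with hcdef
    set z : Fin k → F := x + (-c) • y with hzdef
    have hzp : ∀ p, z p = x p - c * y p := by
      intro p; simp [hzdef, sub_eq_add_neg]
    have hz0 : z ≠ 0 := by
      intro h
      apply hne
      refine ⟨c⁻¹, ?_⟩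
      have hx : x = c • y := by
        funext p
        have h2 := congrFun h p
        rw [hzp p] at h2
        simpa [sub_eq_zero] using h2
      rw [hx, smul_smul, inv_mul_cancel₀ hc, one_smul]
    have hzj : z j = 0 := by
      rw [hzp, hcdef, div_mul_cancel₀ _ hyj, sub_self]
    have hzM : z ∈ blockM T v := by
      rcases hchar x hxM hxj with hx | hx <;> rcases hchar y hyM hyj with hy | hy
      · -- both Y
        refine Or.inl (Or.inl ⟨hz0, fun t ht => ?_⟩)
        rcases eq_or_ne t j with rfl | htj
        · exact hzj
        · rw [hzp, hx.1 t ht htj, hy.1 t ht htj]; ring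
      · -- x Y, y Z
        obtain ⟨s, hsT, hsj, hys, hy0⟩ := hy
        have hzs : z s ≠ 0 := by
          rw [hzp, hx.1 s hsT hsj, zero_sub, neg_ne_zero]
          exact mul_ne_zero hc hys
        have hsupp : suppF z ∩ T = {s} := by
          apply Finset.eq_singleton_iff_unique_mem.mpr
          refine ⟨Finset.mem_inter.mpr ⟨mem_suppF.mpr hzs, hsT⟩, ?_⟩
          intro p hp
          obtain ⟨hp1, hp2⟩ := Finset.mem_inter.mp hp
          by_contra hps
          have hpj : p ≠ j := by rintro rfl; exact (mem_suppF.mp hp1) hzj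
          apply mem_suppF.mp hp1
          rw [hzp, hx.1 p hp2 hpj, hy0 p hpj hps]; ring
        refine Or.inl (Or.inr ⟨hz0, by rw [hsupp]; simp, ?_⟩)
        rintro ⟨i, j', hj', lam, c', hlam, hc', heq⟩
        have hj's : j' = s := by
          by_contra hne'
          apply hzs
          have h2 := congrFun heq s
          simpa [hvT i s hsT, Pi.single_apply, Ne.symm hne'] using h2
        subst hj's
        apply hx.2
        refine ⟨i, j, hj, x j / c', c', div_ne_zero hxj hc', hc', ?_⟩
        funext p
        rcases eq_or_ne p j with rfl | hpj
        · simp [hvT i p hj, Pi.single_apply, div_mul_cancel₀ _ hc', mul_add,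
            mul_div_cancel₀ _ hc']
        · by_cases hpT : p ∈ T
          · simp [hx.1 p hpT hpj, hvT i p hpT, Pi.single_apply, hpj]
          · have hps : p ≠ j' := fun h => hpT (h ▸ hj')
            have h2 := congrFun heq p
            rw [hzp] at h2
            rw [hy0 p hpj hps] at h2
            have hxp : x p = c' * v i p := by
              rw [← sub_zero (x p), ← mul_zero c]
              rw [h2]
              simp [Pi.single_apply, hps]
            simp [hxp, Pi.single_apply, hpj]
      · -- x Z, y Y
        obtain ⟨t, htT, htj, hxt, hx0⟩ := hx
        have hzt : z t ≠ 0 := by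
          rw [hzp, hy.1 t htT htj, mul_zero, sub_zero]; exact hxt
        have hsupp : suppF z ∩ T = {t} := by
          apply Finset.eq_singleton_iff_unique_mem.mpr
          refine ⟨Finset.mem_inter.mpr ⟨mem_suppF.mpr hzt, htT⟩, ?_⟩
          intro p hp
          obtain ⟨hp1, hp2⟩ := Finset.mem_inter.mp hp
          by_contra hpt
          have hpj : p ≠ j := by rintro rfl; exact (mem_suppF.mp hp1) hzj
          apply mem_suppF.mp hp1
          rw [hzp, hx0 p hpj hpt, hy.1 p hp2 hpj]; ring
        refine Or.inl (Or.inr ⟨hz0, by rw [hsupp]; simp, ?_⟩)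
        rintro ⟨i, j', hj', lam, c', hlam, hc', heq⟩
        have hj't : j' = t := by
          by_contra hne'
          apply hzt
          have h2 := congrFun heq t
          simpa [hvT i t htT, Pi.single_apply, Ne.symm hne'] using h2
        subst hj't
        apply hy.2
        have hd : -c⁻¹ * c' ≠ 0 := mul_ne_zero (neg_ne_zero.mpr (inv_ne_zero hc)) hc'
        refine ⟨i, j, hj, y j / (-c⁻¹ * c'), -c⁻¹ * c', div_ne_zero hyj hd, hd, ?_⟩
        funext p
        rcases eq_or_ne p j with rfl | hpj
        · simp only [Pi.smul_apply, Pi.add_apply, Pi.single_eq_same, smul_eq_mul,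
            hvT i p hj, zero_add, mul_one]
          rw [mul_comm, div_mul_cancel₀ _ hd]
        · by_cases hpT : p ∈ T
          · simp [hy.1 p hpT hpj, hvT i p hpT, Pi.single_apply, hpj]
          · have hpt : p ≠ j' := fun h => hpT (h ▸ hj')
            have h2 := congrFun heq p
            rw [hzp] at h2
            rw [hx0 p hpj hpt] at h2
            have hyp : y p = -c⁻¹ * c' * v i p := by
              have h3 : -(c * y p) = c' * v i p := by
                rw [← zero_sub (c * y p), h2]
                simp [Pi.single_apply, hpt]
              field_simp at h3 ⊢
              linear_combination -h3
            simp [hyp, Pi.single_apply, hpj]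
      · -- both Z
        obtain ⟨t, htT, htj, hxt, hx0⟩ := hx
        obtain ⟨s, hsT, hsj, hys, hy0⟩ := hy
        have hoff : ∀ p : Fin k, p ≠ j → p ≠ t → p ≠ s → z p = 0 := by
          intro p h1 h2 h3
          rw [hzp, hx0 p h1 h2, hy0 p h1 h3]; ring
        rcases eq_or_ne t s with rfl | hts
        · -- same coordinate: z supported on {t}
          have hzt : z t ≠ 0 := by
            intro h0
            apply hz0
            funext p
            rcases eq_or_ne p j with rfl | h1
            · exact hzj
            rcases eq_or_ne p t with rfl | h2
            · exact h0
            · exact hoff p h1 h2 h2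
          have hsupp : suppF z ∩ T = {t} := by
            apply Finset.eq_singleton_iff_unique_mem.mpr
            refine ⟨Finset.mem_inter.mpr ⟨mem_suppF.mpr hzt, htT⟩, ?_⟩
            intro p hp
            obtain ⟨hp1, hp2⟩ := Finset.mem_inter.mp hp
            by_contra hpt
            have hpj : p ≠ j := by rintro rfl; exact (mem_suppF.mp hp1) hzj
            exact (mem_suppF.mp hp1) (hoff p hpj hpt hpt)
          refine Or.inl (Or.inr ⟨hz0, by rw [hsupp]; simp, ?_⟩)
          rintro ⟨i, j', hj', lam, c', hlam, hc', heq⟩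
          obtain ⟨p₀, hp₀⟩ := Function.ne_iff.mp (hv0 i)
          simp only [Pi.zero_apply] at hp₀
          have hp₀T : p₀ ∉ T := fun h => hp₀ (hvT i p₀ h)
          have hp₀j : p₀ ≠ j := fun h => hp₀T (h ▸ hj)
          have hp₀t : p₀ ≠ t := fun h => hp₀T (h ▸ htT)
          have hp₀j' : p₀ ≠ j' := fun h => hp₀T (h ▸ hj')
          have h2 := congrFun heq p₀
          rw [hoff p₀ hp₀j hp₀t hp₀t] at h2
          have h3 : c' * v i p₀ = 0 := by
            simpa [Pi.single_apply, hp₀j'] using h2.symm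
          exact hp₀ ((mul_eq_zero.mp h3).resolve_left hc')
        · -- t ≠ s : z ∈ ZT
          have hzt : z t ≠ 0 := by
            rw [hzp, hy0 t htj hts, mul_zero, sub_zero]; exact hxt
          have hzs : z s ≠ 0 := by
            rw [hzp, hx0 s hsj (Ne.symm hts), zero_sub, neg_ne_zero]
            exact mul_ne_zero hc hys
          have hset : suppF z = {t, s} := by
            ext p
            simp only [mem_suppF, Finset.mem_insert, Finset.mem_singleton]
            constructor
            · intro hp
              by_contra hcon
              push_neg at hcon
              have hpj : p ≠ j := by rintro rfl; exact hp hzj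
              exact hp (hoff p hpj hcon.1 hcon.2)
            · rintro (rfl | rfl)
              exacts [hzt, hzs]
          refine Or.inr ⟨hz0, ?_, ?_⟩
          · rw [hset]
            intro p hp
            rcases Finset.mem_insert.mp hp with rfl | hp'
            · exact htT
            · rw [Finset.mem_singleton.mp hp']; exact hsT
          · rw [hset]; exact Finset.card_pair hts
    refine ⟨1, -c, ?_, ?_⟩ <;> rw [one_smul]
    · exact hz0
    · exact hzM
end
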